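/- Let 𝔏 be a Lie conformal algebra over a field k of characteristic zero, generated by a subset 𝒢 with weight function wt : 𝒢 → ℕ, with filtrations 𝔏'_i and 𝔏_i. Then for all i, j ∈ ℤ and n ∈ ℕ one has 𝔏_i [n] 𝔏_j ⊆ 𝔏'_{i+j+n}. In particular, if there is r ∈ ℕ such that every monomial in 𝒢 of weight ≥ r is zero, then 𝔏_i [n] 𝔏_j = 0 whenever i + j + n ≥ r. -/

import Mathlib

open Finset

/-- A (bundled) conformal algebra over a field `𝕜`. -/
structure ConfAlg (𝕜 : Type) [Field 𝕜] where
  A : Type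
  [ag : AddCommGroup A]
  [mo : Module 𝕜 A]
  mul : ℕ → A →ₗ[𝕜] A →ₗ[𝕜] A
  D : A →ₗ[𝕜] A
  dmul_zero : ∀ a b : A, mul 0 (D a) b = 0
  dmul_succ : ∀ (n : ℕ) (a b : A), mul (n + 1) (D a) b = (-(n + 1 : 𝕜)) • mul n a b
  leibniz : ∀ (n : ℕ) (a b : A), D (mul n a b) = mul n (D a) b + mul n a (D b)
  loc : ∀ a b : A, ∃ N : ℕ, ∀ n : ℕ, N ≤ n → mul n a b = 0

attribute [instance] ConfAlg.ag ConfAlg.mo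

variable {𝕜 : Type} [Field 𝕜]

/-- Divided power of the derivation: `D^{(s)} = D^s / s!`. -/
noncomputable def ConfAlg.dpow (C : ConfAlg 𝕜) (s : ℕ) (a : C.A) : C.A :=
  (s.factorial : 𝕜)⁻¹ • (C.D ^ s) a

/-- Conformal associativity. -/
def ConfAlg.IsAssoc (C : ConfAlg 𝕜) : Prop :=
  ∀ (a b c : C.A) (m n : ℕ),
    C.mul n (C.mul m a b) c =
      ∑ s ∈ Finset.range (m + 1), ((-1 : 𝕜) ^ s * (m.choose s : 𝕜)) •
        C.mul (m - s) a (C.mul (n + s) b c)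

/-- Conformal Jacobi identity together with quasi-symmetry. -/
def ConfAlg.IsLie (C : ConfAlg 𝕜) : Prop :=
  (∀ (a b c : C.A) (m n : ℕ),
    C.mul n (C.mul m a b) c =
      ∑ s ∈ Finset.range (m + 1), ((-1 : 𝕜) ^ s * (m.choose s : 𝕜)) •
        (C.mul (m - s) a (C.mul (n + s) b c) - C.mul (n + s) b (C.mul (m - s) a c))) ∧
  (∀ (a b : C.A) (n N : ℕ), (∀ s : ℕ, N ≤ s → C.mul (n + s) b a = 0) →
    C.mul n a b =
      -∑ s ∈ Finset.range N, ((-1 : 𝕜) ^ (s + n)) • C.dpow s (C.mul (n + s) b a))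

/-- Monomials in a family `f` with weights `wt`; `IsMon C f wt w v` means `w`
is a monomial (arbitrary placement of parentheses) of weight `v`. -/
inductive ConfAlg.IsMon (C : ConfAlg 𝕜) {I : Type} (f : I → C.A) (wt : I → ℕ) : C.A → ℕ → Prop
  | base (i : I) : ConfAlg.IsMon C f wt (f i) (wt i)
  | mul (n : ℕ) {a b : C.A} {wa wb : ℕ} :
      ConfAlg.IsMon C f wt a wa → ConfAlg.IsMon C f wt b wb →
      ConfAlg.IsMon C f wt (C.mul n a b) (wa + wb + n)

/-- `G` generates `C`. -/
def ConfAlg.Generates (C : ConfAlg 𝕜) (G : Set C.A) : Prop :=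
  ∀ p : Submodule 𝕜 C.A, G ⊆ ↑p → (∀ a ∈ p, C.D a ∈ p) →
    (∀ (n : ℕ) (a b : C.A), a ∈ p → b ∈ p → C.mul n a b ∈ p) → ∀ x : C.A, x ∈ p

/-- The filtration `𝔏'_i`. -/
def ConfAlg.Lp (C : ConfAlg 𝕜) {I : Type} (f : I → C.A) (wt : I → ℕ) (i : ℤ) :
    Submodule 𝕜 C.A :=
  Submodule.span 𝕜 {x : C.A | ∃ (m : ℕ) (w : C.A) (v : ℕ),
    C.IsMon f wt w v ∧ x = (C.D ^ m) w ∧ i + m ≤ (v : ℤ)}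

/-- The filtration `𝔏_i`. -/
def ConfAlg.Lf (C : ConfAlg 𝕜) {I : Type} (f : I → C.A) (wt : I → ℕ) (i : ℤ) : Set C.A :=
  {a : C.A | ∃ n : ℕ, (C.D ^ n) a ∈ C.Lp f wt (i - n)}

/-!
`𝔏'` drops by one under `D`, and by the Leibniz rule and `(Da)[n+1]b = -(n+1)·a[n]b`, starting
from the monomial `u[n]w`, the product `(D^p u)[n](D^q w)` of derivatives of monomials lies in
`𝔏'` at level `wt u - p + wt w - q + n`; hence `𝔏'_i [n] 𝔏'_j ⊆ 𝔏'_{i+j+n}`. The same rule read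
backwards (dividing by `n+1`, which is where characteristic zero enters) trades `a ∈ 𝔏_i`, i.e.
`D^p a ∈ 𝔏'_{i-p}`, for the bound on `a[n]b`. On the right, quasi-symmetry writes `a[n]b` through
the `D^{(s)}(b[n+s]a)`, where the loss `s` under `D^{(s)}` is compensated by the shift `n+s`.
-/

namespace ConfAlg

variable {C : ConfAlg 𝕜} {I : Type} {f : I → C.A} {wt : I → ℕ}

lemma Lp_antitone : Antitone (C.Lp f wt) := by
  intro i' i h
  apply Submodule.span_mono
  rintro x ⟨m, w, v, hw, rfl, hv⟩
  exact ⟨m, w, v, hw, rfl, by omega⟩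

lemma pow_D_mem_Lp_of_isMon {w : C.A} {v : ℕ} (hw : C.IsMon f wt w v) {i : ℤ} (m : ℕ)
    (h : i + m ≤ v) : (C.D ^ m) w ∈ C.Lp f wt i :=
  Submodule.subset_span ⟨m, w, v, hw, rfl, h⟩

lemma D_mem_Lp {x : C.A} {i : ℤ} (h : x ∈ C.Lp f wt i) : C.D x ∈ C.Lp f wt (i - 1) := by
  induction h using Submodule.span_induction with
  | mem x hx =>
    obtain ⟨m, w, v, hw, rfl, hv⟩ := hx
    rw [← Module.End.mul_apply, ← pow_succ']
    exact pow_D_mem_Lp_of_isMon hw (m + 1) (by push_cast; omega)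
  | zero => simp
  | add x y _ _ hx hy => simpa using Submodule.add_mem _ hx hy
  | smul c x _ hx => simpa using Submodule.smul_mem _ c hx

lemma pow_D_mem_Lp {x : C.A} {i : ℤ} (s : ℕ) (h : x ∈ C.Lp f wt i) :
    (C.D ^ s) x ∈ C.Lp f wt (i - s) := by
  induction s with
  | zero => simpa using h
  | succ s ih =>
    rw [pow_succ', Module.End.mul_apply]
    exact Lp_antitone (by push_cast; omega) (D_mem_Lp ih)

lemma dpow_mem_Lp {x : C.A} {i : ℤ} (s : ℕ) (h : x ∈ C.Lp f wt i) :
    C.dpow s x ∈ C.Lp f wt (i - s) :=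
  Submodule.smul_mem _ _ (pow_D_mem_Lp s h)

lemma mul_D_left_mem_Lp {x y : C.A} {k : ℤ} (h : ∀ n : ℕ, C.mul n x y ∈ C.Lp f wt (k + n))
    (n : ℕ) : C.mul n (C.D x) y ∈ C.Lp f wt (k - 1 + n) := by
  cases n with
  | zero => simp [C.dmul_zero]
  | succ n =>
    rw [C.dmul_succ]
    exact Submodule.smul_mem _ _ (Lp_antitone (by push_cast; omega) (h n))

lemma mul_D_right_mem_Lp {x y : C.A} {k : ℤ} (h : ∀ n : ℕ, C.mul n x y ∈ C.Lp f wt (k + n))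
    (n : ℕ) : C.mul n x (C.D y) ∈ C.Lp f wt (k - 1 + n) := by
  rw [eq_sub_of_add_eq' (C.leibniz n x y).symm]
  exact Submodule.sub_mem _ (Lp_antitone (by omega) (D_mem_Lp (h n)))
    (mul_D_left_mem_Lp h n)

lemma mul_pow_D_mem_Lp {x y : C.A} {k : ℤ} (h : ∀ n : ℕ, C.mul n x y ∈ C.Lp f wt (k + n))
    (p q n : ℕ) : C.mul n ((C.D ^ p) x) ((C.D ^ q) y) ∈ C.Lp f wt (k - p - q + n) := by
  induction q generalizing n with
  | zero =>
    induction p generalizing n with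
    | zero => simpa using h n
    | succ p ih =>
      rw [pow_succ', Module.End.mul_apply]
      exact Lp_antitone (by push_cast; omega) (mul_D_left_mem_Lp ih n)
  | succ q ih =>
    rw [pow_succ', Module.End.mul_apply]
    exact Lp_antitone (by push_cast; omega) (mul_D_right_mem_Lp ih n)

lemma mul_mem_Lp {i j : ℤ} (n : ℕ) {a b : C.A} (ha : a ∈ C.Lp f wt i)
    (hb : b ∈ C.Lp f wt j) : C.mul n a b ∈ C.Lp f wt (i + j + n) := by
  refine (?_ : Submodule.map₂ (C.mul n) (C.Lp f wt i) (C.Lp f wt j) ≤ _)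
    (Submodule.apply_mem_map₂ _ ha hb)
  rw [Lp, Lp, Submodule.map₂_span_span, Submodule.span_le]
  rintro _ ⟨_, ⟨p, u, vu, hu, rfl, hvu⟩, _, ⟨q, w, vw, hw, rfl, hvw⟩, rfl⟩
  have hmon (n : ℕ) : C.mul n u w ∈ C.Lp f wt ((vu + vw : ℕ) + n) :=
    pow_D_mem_Lp_of_isMon (.mul n hu hw) 0 (by push_cast; omega)
  exact Lp_antitone (by push_cast; omega) (mul_pow_D_mem_Lp hmon p q n)

lemma mul_mem_Lp_of_mem_Lf_left [CharZero 𝕜] {b : C.A} {j : ℤ}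
    (hb : ∀ (i : ℤ) (n : ℕ) (a : C.A), a ∈ C.Lp f wt i → C.mul n a b ∈ C.Lp f wt (i + j + n))
    {i : ℤ} (n : ℕ) {a : C.A} (ha : a ∈ C.Lf f wt i) :
    C.mul n a b ∈ C.Lp f wt (i + j + n) := by
  obtain ⟨p, hp⟩ := ha
  induction p generalizing i a n with
  | zero => simpa using hb i n a (by simpa using hp)
  | succ p ih =>
    have hDa : (C.D ^ p) (C.D a) ∈ C.Lp f wt (i - 1 - p) := by
      rw [← Module.End.mul_apply, ← pow_succ]
      exact Lp_antitone (by push_cast; omega) hp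
    have key := ih (n + 1) hDa
    rw [C.dmul_succ] at key
    have hne : (-(n + 1 : 𝕜)) ≠ 0 := neg_ne_zero.2 (by exact_mod_cast n.succ_ne_zero)
    rw [← inv_smul_smul₀ hne (C.mul n a b)]
    exact Submodule.smul_mem _ _ (Lp_antitone (by push_cast; omega) key)

lemma mul_mem_Lp_of_mem_Lf_right [CharZero 𝕜] (hLie : C.IsLie) {i j : ℤ} (n : ℕ) {a b : C.A}
    (ha : a ∈ C.Lp f wt i) (hb : b ∈ C.Lf f wt j) :
    C.mul n a b ∈ C.Lp f wt (i + j + n) := by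
  obtain ⟨N, hN⟩ := C.loc b a
  rw [hLie.2 a b n N fun s hs => hN (n + s) (by omega)]
  refine Submodule.neg_mem _ (Submodule.sum_mem _ fun s _ => Submodule.smul_mem _ _ ?_)
  have hba := mul_mem_Lp_of_mem_Lf_left (fun _ n' _ hb' => mul_mem_Lp n' hb' ha) (n + s) hb
  exact Lp_antitone (by push_cast; omega) (dpow_mem_Lp s hba)

lemma mul_mem_Lp_of_mem_Lf [CharZero 𝕜] (hLie : C.IsLie) {i j : ℤ} (n : ℕ) {a b : C.A}
    (ha : a ∈ C.Lf f wt i) (hb : b ∈ C.Lf f wt j) :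
    C.mul n a b ∈ C.Lp f wt (i + j + n) :=
  mul_mem_Lp_of_mem_Lf_left (fun _ n' _ ha' => mul_mem_Lp_of_mem_Lf_right hLie n' ha' hb) n ha

lemma Lp_eq_bot {r : ℕ} (hr : ∀ w v, C.IsMon f wt w v → r ≤ v → w = 0) {k : ℤ}
    (hk : (r : ℤ) ≤ k) : C.Lp f wt k = ⊥ := by
  rw [Lp, Submodule.span_eq_bot]
  rintro x ⟨m, w, v, hw, rfl, hv⟩
  rw [hr w v hw (by omega), map_zero]

end ConfAlg

theorem filtration_Lf_mul_general
    [CharZero 𝕜] (C : ConfAlg 𝕜) (hLie : C.IsLie) (G : Set C.A) (wt : ↥G → ℕ) :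
    (∀ (i j : ℤ) (n : ℕ) (a b : C.A),
        a ∈ C.Lf (Subtype.val : ↥G → C.A) wt i →
        b ∈ C.Lf (Subtype.val : ↥G → C.A) wt j →
        C.mul n a b ∈ C.Lp (Subtype.val : ↥G → C.A) wt (i + j + n)) ∧
    (∀ r : ℕ, (∀ (w : C.A) (v : ℕ),
        C.IsMon (Subtype.val : ↥G → C.A) wt w v → r ≤ v → w = 0) →
      ∀ (i j : ℤ) (n : ℕ), (r : ℤ) ≤ i + j + n →
        ∀ a b : C.A, a ∈ C.Lf (Subtype.val : ↥G → C.A) wt i →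
          b ∈ C.Lf (Subtype.val : ↥G → C.A) wt j → C.mul n a b = 0) := by
  refine ⟨fun i j n a b ha hb => ConfAlg.mul_mem_Lp_of_mem_Lf hLie n ha hb, ?_⟩
  intro r hr i j n hijn a b ha hb
  simpa [ConfAlg.Lp_eq_bot hr hijn] using ConfAlg.mul_mem_Lp_of_mem_Lf hLie n ha hb

/-- `𝔏_i [n] 𝔏_j ⊆ 𝔏'_{i+j+n}`; in particular, if every monomial in `𝒢` of
weight `≥ r` is zero, then `𝔏_i [n] 𝔏_j = 0` whenever `i + j + n ≥ r`. -/
theorem filtration_Lf_mul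
    [CharZero 𝕜] (C : ConfAlg 𝕜) (hLie : C.IsLie) (G : Set C.A) (wt : ↥G → ℕ)
    (hgen : C.Generates G) :
    (∀ (i j : ℤ) (n : ℕ) (a b : C.A),
        a ∈ C.Lf (Subtype.val : ↥G → C.A) wt i →
        b ∈ C.Lf (Subtype.val : ↥G → C.A) wt j →
        C.mul n a b ∈ C.Lp (Subtype.val : ↥G → C.A) wt (i + j + n)) ∧
    (∀ r : ℕ, (∀ (w : C.A) (v : ℕ),
        C.IsMon (Subtype.val : ↥G → C.A) wt w v → r ≤ v → w = 0) →
      ∀ (i j : ℤ) (n : ℕ), (r : ℤ) ≤ i + j + n →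
        ∀ a b : C.A, a ∈ C.Lf (Subtype.val : ↥G → C.A) wt i →
          b ∈ C.Lf (Subtype.val : ↥G → C.A) wt j → C.mul n a b = 0) :=
  filtration_Lf_mul_general C hLie G wt
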